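/- arXiv:2407.10516 — 2 statements merged into one kernel-verified Lean document; each statement's English description precedes it below -/
import Mathlib

section
/- Let d = 1, t > 1 and ν₀, ν₁ ∈ P₂(ℝ). Then μ ∈ P₂(ℝ) minimizes F_t(ν₀,ν₁;·) over P₂(ℝ) if and only if its quantile function F_μ^{[-1]} minimizes the functional Q ↦ ∫₀¹ | Q(a) − ( t·F_{ν₁}^{[-1]}(a) − (t−1)·F_{ν₀}^{[-1]}(a) ) |² da over all quantile functions Q of measures in P₂(ℝ); i.e., the minimizers of the metric extrapolation problem are exactly the measures whose quantile function is an L²((0,1))-projection of t·F_{ν₁}^{[-1]} − (t−1)·F_{ν₀}^{[-1]} onto the set of quantile functions. -/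
open MeasureTheory
open scoped ENNReal

noncomputable section

/-- `γ` is a coupling of `μ` and `ν` (measures on `ℝ`). -/
def IsCouplingR (γ : Measure (ℝ × ℝ)) (μ ν : Measure ℝ) : Prop :=
  γ.map Prod.fst = μ ∧ γ.map Prod.snd = ν

/-- Probability measures on `ℝ` with finite second moment. -/
def P2R : Set (Measure ℝ) :=
  {μ | IsProbabilityMeasure μ ∧ Integrable (fun x => |x| ^ 2) μ}

/-- Squared Wasserstein distance on `P₂(ℝ)`. -/
noncomputable def W2sqR (μ ν : Measure ℝ) : ℝ :=
  sInf {r | ∃ γ : Measure (ℝ × ℝ), IsProbabilityMeasure γ ∧ IsCouplingR γ μ ν ∧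
      r = ∫ p, |p.1 - p.2| ^ 2 ∂γ}

/-- Metric extrapolation functional on `P₂(ℝ)`. -/
noncomputable def FtR (t : ℝ) (ν₀ ν₁ μ : Measure ℝ) : ℝ :=
  W2sqR μ ν₁ / (2 * (t - 1)) - W2sqR μ ν₀ / (2 * t)

/-- The quantile function (left-continuous pseudo-inverse of the cumulative
distribution function) of a measure on `ℝ`:
`F_μ^{[-1]}(a) = inf { x : μ((-∞,x]) ≥ a }`. -/
noncomputable def quantile (μ : Measure ℝ) (a : ℝ) : ℝ :=
  sInf {x : ℝ | a ≤ (μ (Set.Iic x)).toReal}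


open Set Filter ProbabilityTheory
open scoped Topology
set_option linter.unusedSectionVars false

namespace Stmt17

variable (μ : Measure ℝ) [IsProbabilityMeasure μ]

lemma quantile_set_eq (a : ℝ) :
    {x : ℝ | a ≤ (μ (Set.Iic x)).toReal} = {x : ℝ | a ≤ cdf μ x} := by
  ext x; simp [cdf_eq_real, measureReal_def]

lemma quantile_eq (a : ℝ) : quantile μ a = sInf {x : ℝ | a ≤ cdf μ x} := by
  rw [quantile, quantile_set_eq]

lemma nonempty_q {a : ℝ} (ha1 : a < 1) : {x : ℝ | a ≤ cdf μ x}.Nonempty := by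
  have h := (tendsto_cdf_atTop μ).eventually (lt_mem_nhds ha1)
  obtain ⟨x, hx⟩ := h.exists
  exact ⟨x, le_of_lt hx⟩

lemma bddBelow_q {a : ℝ} (ha0 : 0 < a) : BddBelow {x : ℝ | a ≤ cdf μ x} := by
  have h := (tendsto_cdf_atBot μ).eventually (gt_mem_nhds ha0)
  rw [Filter.eventually_atBot] at h
  obtain ⟨M, hM⟩ := h
  refine ⟨M, fun y hy => ?_⟩
  by_contra hlt
  push_neg at hlt
  exact absurd hy (not_le.mpr (hM y hlt.le))

lemma quantile_le_iff {a x : ℝ} (ha0 : 0 < a) (ha1 : a < 1) :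
    quantile μ a ≤ x ↔ a ≤ cdf μ x := by
  rw [quantile_eq]
  constructor
  · intro h
    have key : ∀ y, x < y → a ≤ cdf μ y := by
      intro y hy
      obtain ⟨z, hz, hzy⟩ := (csInf_lt_iff (bddBelow_q μ ha0) (nonempty_q μ ha1)).mp
        (lt_of_le_of_lt h hy)
      exact le_trans hz ((monotone_cdf μ) hzy.le)
    have hrc : Filter.Tendsto (cdf μ) (𝓝[>] x) (𝓝 (cdf μ x)) :=
      ((cdf μ).right_continuous x).tendsto.mono_left (nhdsWithin_mono x Ioi_subset_Ici_self)
    exact ge_of_tendsto hrc (eventually_nhdsWithin_of_forall fun y hy => key y hy)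
  · intro h
    exact csInf_le (bddBelow_q μ ha0) h

set_option linter.unusedSectionVars false

/-- Measurable modification of the quantile function, set to `0` off `(0,1)`. -/
noncomputable def qm (μ : Measure ℝ) (a : ℝ) : ℝ :=
  if a ∈ Set.Ioo (0:ℝ) 1 then quantile μ a else 0

lemma qm_eq_on {a : ℝ} (ha : a ∈ Set.Ioo (0:ℝ) 1) : qm μ a = quantile μ a := if_pos ha

lemma qm_preimage_Iic (x : ℝ) :
    qm μ ⁻¹' Iic x =
      (Ioo (0:ℝ) 1 ∩ Iic (cdf μ x)) ∪ ((Ioo (0:ℝ) 1)ᶜ ∩ {a : ℝ | (0:ℝ) ≤ x}) := by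
  ext a
  by_cases ha : a ∈ Ioo (0:ℝ) 1
  · simp only [mem_preimage, mem_Iic, qm, if_pos ha, mem_union, mem_inter_iff, ha,
      mem_compl_iff, not_true_eq_false, false_and, or_false, true_and]
    exact quantile_le_iff μ ha.1 ha.2
  · simp [qm, if_neg ha, ha]

lemma measurable_qm : Measurable (qm μ) := by
  apply measurable_of_Iic
  intro x
  rw [qm_preimage_Iic]
  refine ((measurableSet_Ioo.inter measurableSet_Iic).union
    (measurableSet_Ioo.compl.inter ?_))
  by_cases h : (0:ℝ) ≤ x
  · have : {a : ℝ | (0:ℝ) ≤ x} = univ := eq_univ_of_forall fun _ => h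
    rw [this]; exact MeasurableSet.univ
  · have : {a : ℝ | (0:ℝ) ≤ x} = ∅ := eq_empty_of_forall_notMem fun _ => h
    rw [this]; exact MeasurableSet.empty

/-- Lebesgue measure on `(0,1)`. -/
noncomputable def leb01 : Measure ℝ := volume.restrict (Set.Ioo (0:ℝ) 1)

instance : IsProbabilityMeasure leb01 :=
  ⟨by simp [leb01, Real.volume_Ioo]⟩

lemma volume_Ioo_inter_Iic {c : ℝ} (h0 : 0 ≤ c) (h1 : c ≤ 1) :
    volume (Ioo (0:ℝ) 1 ∩ Iic c) = ENNReal.ofReal c := by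
  rcases lt_or_ge c 1 with hc | hc
  · have : Ioo (0:ℝ) 1 ∩ Iic c = Ioc 0 c := by
      ext a
      simp only [mem_inter_iff, mem_Ioo, mem_Iic, mem_Ioc]
      exact ⟨fun h => ⟨h.1.1, h.2⟩, fun h => ⟨⟨h.1, lt_of_le_of_lt h.2 hc⟩, h.2⟩⟩
    rw [this, Real.volume_Ioc, sub_zero]
  · have hc1 : c = 1 := le_antisymm h1 hc
    subst hc1
    have : Ioo (0:ℝ) 1 ∩ Iic 1 = Ioo 0 1 := by
      apply inter_eq_self_of_subset_left
      intro a ha; exact le_of_lt ha.2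
    rw [this, Real.volume_Ioo]; norm_num

lemma leb01_qm_le (x : ℝ) :
    leb01 {a : ℝ | qm μ a ≤ x} = μ (Iic x) := by
  have hmeas : MeasurableSet {a : ℝ | qm μ a ≤ x} := measurableSet_le (measurable_qm μ) measurable_const
  rw [leb01, Measure.restrict_apply hmeas]
  have : {a : ℝ | qm μ a ≤ x} ∩ Ioo 0 1 = Ioo (0:ℝ) 1 ∩ Iic (cdf μ x) := by
    ext a
    simp only [mem_inter_iff, mem_setOf_eq, mem_Iic]
    constructor
    · rintro ⟨h1, h2⟩
      refine ⟨h2, ?_⟩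
      rw [qm_eq_on μ h2] at h1
      exact (quantile_le_iff μ h2.1 h2.2).mp h1
    · rintro ⟨h1, h2⟩
      refine ⟨?_, h1⟩
      rw [qm_eq_on μ h1]
      exact (quantile_le_iff μ h1.1 h1.2).mpr h2
  rw [this, volume_Ioo_inter_Iic (cdf_nonneg μ x) (cdf_le_one μ x), ofReal_cdf]

lemma map_qm : Measure.map (qm μ) leb01 = μ := by
  have : IsProbabilityMeasure (Measure.map (qm μ) leb01) :=
    Measure.isProbabilityMeasure_map (measurable_qm μ).aemeasurable
  refine Measure.ext_of_Iic _ _ (fun x => ?_)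
  rw [Measure.map_apply (measurable_qm μ) measurableSet_Iic]
  exact leb01_qm_le μ x

lemma leb01_qm_le_pair (ν : Measure ℝ) [IsProbabilityMeasure ν] (s u : ℝ) :
    leb01 {a : ℝ | qm μ a ≤ s ∧ qm ν a ≤ u} = min (μ (Iic s)) (ν (Iic u)) := by
  have hmeas : MeasurableSet {a : ℝ | qm μ a ≤ s ∧ qm ν a ≤ u} :=
    (measurableSet_le (measurable_qm μ) measurable_const).inter
      (measurableSet_le (measurable_qm ν) measurable_const)
  rw [leb01, Measure.restrict_apply hmeas]
  have : {a : ℝ | qm μ a ≤ s ∧ qm ν a ≤ u} ∩ Ioo 0 1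
      = Ioo (0:ℝ) 1 ∩ Iic (min (cdf μ s) (cdf ν u)) := by
    ext a
    simp only [mem_inter_iff, mem_setOf_eq, mem_Iic, le_min_iff]
    constructor
    · rintro ⟨⟨h1, h2⟩, h3⟩
      rw [qm_eq_on μ h3] at h1; rw [qm_eq_on ν h3] at h2
      exact ⟨h3, (quantile_le_iff μ h3.1 h3.2).mp h1, (quantile_le_iff ν h3.1 h3.2).mp h2⟩
    · rintro ⟨h1, h2, h3⟩
      refine ⟨⟨?_, ?_⟩, h1⟩
      · rw [qm_eq_on μ h1]; exact (quantile_le_iff μ h1.1 h1.2).mpr h2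
      · rw [qm_eq_on ν h1]; exact (quantile_le_iff ν h1.1 h1.2).mpr h3
  rw [this, volume_Ioo_inter_Iic (le_min (cdf_nonneg μ s) (cdf_nonneg ν u))
      (min_le_of_left_le (cdf_le_one μ s))]
  rcases le_total (cdf μ s) (cdf ν u) with h | h
  · have h' : μ (Iic s) ≤ ν (Iic u) := by
      rw [← ofReal_cdf μ, ← ofReal_cdf ν]; exact ENNReal.ofReal_le_ofReal h
    rw [min_eq_left h, ofReal_cdf, min_eq_left h']
  · have h' : ν (Iic u) ≤ μ (Iic s) := by
      rw [← ofReal_cdf μ, ← ofReal_cdf ν]; exact ENNReal.ofReal_le_ofReal h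
    rw [min_eq_right h, ofReal_cdf, min_eq_right h']


/-! ### Area of triangles -/

lemma volume_tri {m M : ℝ} (hmM : m < M) :
    (volume : Measure (ℝ × ℝ)) {q : ℝ × ℝ | m ≤ q.1 ∧ q.1 < q.2 ∧ q.2 < M}
      = ENNReal.ofReal ((M - m) ^ 2 / 2) := by
  have hA : MeasurableSet {q : ℝ × ℝ | m ≤ q.1 ∧ q.1 < q.2 ∧ q.2 < M} := by
    refine (measurableSet_le measurable_const measurable_fst).inter
      ((measurableSet_lt measurable_fst measurable_snd).inter
        (measurableSet_lt measurable_snd measurable_const))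
  rw [Measure.volume_eq_prod, Measure.prod_apply hA]
  have hsec : ∀ s : ℝ, (Prod.mk s ⁻¹' {q : ℝ × ℝ | m ≤ q.1 ∧ q.1 < q.2 ∧ q.2 < M})
      = if m ≤ s then Ioo s M else ∅ := by
    intro s
    by_cases h : m ≤ s
    · simp only [if_pos h]
      ext u; simp [h, mem_Ioo]
    · simp only [if_neg h]
      ext u; simp [h]
  have h1 : (fun s : ℝ => volume (Prod.mk s ⁻¹' {q : ℝ × ℝ | m ≤ q.1 ∧ q.1 < q.2 ∧ q.2 < M}))
      = (Ici m).indicator (fun s => ENNReal.ofReal (M - s)) := by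
    funext s
    rw [hsec s]
    rw [Set.indicator_apply]
    by_cases h : m ≤ s
    · rw [if_pos h, if_pos (mem_Ici.mpr h), Real.volume_Ioo]
    · rw [if_neg h, if_neg (fun hh => h (mem_Ici.mp hh)), measure_empty]
  rw [h1, lintegral_indicator measurableSet_Ici]
  have hsplit : Ici m = Ico m M ∪ Ici M := (Ico_union_Ici_eq_Ici hmM.le).symm
  rw [hsplit, lintegral_union measurableSet_Ici (by
    rw [Set.disjoint_left]; intro a ha ha'; exact absurd (mem_Ici.mp ha') (not_le.mpr ha.2))]
  have hz : ∫⁻ s in Ici M, ENNReal.ofReal (M - s) = 0 := by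
    rw [setLIntegral_congr_fun_ae measurableSet_Ici
      (ae_of_all _ (fun s hs => by
        rw [ENNReal.ofReal_eq_zero.mpr (sub_nonpos.mpr (mem_Ici.mp hs))]))]
    simp
  rw [hz, add_zero]
  have hInt : IntegrableOn (fun s : ℝ => M - s) (Ico m M) volume := by
    have hc : ContinuousOn (fun s : ℝ => M - s) (Icc m M) :=
      (continuous_const.sub continuous_id).continuousOn
    exact hc.integrableOn_Icc.mono_set Ico_subset_Icc_self
  rw [← ofReal_integral_eq_lintegral_ofReal hInt
    ((ae_restrict_iff' measurableSet_Ico).mpr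
      (ae_of_all _ (fun s hs => sub_nonneg.mpr hs.2.le)))]
  congr 1
  rw [setIntegral_congr_set (Ico_ae_eq_Ioc), ← intervalIntegral.integral_of_le hmM.le]
  rw [intervalIntegral.integral_sub intervalIntegrable_const intervalIntegral.intervalIntegrable_id,
    intervalIntegral.integral_const, integral_id]
  simp only [smul_eq_mul]
  ring

/-- The planar set whose area is `|x-y|^2/2`. -/
def Tset (x y : ℝ) : Set (ℝ × ℝ) :=
  {q : ℝ × ℝ | q.1 < q.2 ∧ ((x ≤ q.1 ∧ q.2 < y) ∨ (y ≤ q.1 ∧ q.2 < x))}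

lemma measurableSet_Tset (x y : ℝ) : MeasurableSet (Tset x y) := by
  refine (measurableSet_lt measurable_fst measurable_snd).inter
    (((measurableSet_le measurable_const measurable_fst).inter
      (measurableSet_lt measurable_snd measurable_const)).union
      ((measurableSet_le measurable_const measurable_fst).inter
        (measurableSet_lt measurable_snd measurable_const)))

lemma volume_Tset (x y : ℝ) :
    2 * (volume : Measure (ℝ × ℝ)) (Tset x y) = ENNReal.ofReal (|x - y| ^ 2) := by
  rcases lt_trichotomy x y with h | h | h
  · have : Tset x y = {q : ℝ × ℝ | x ≤ q.1 ∧ q.1 < q.2 ∧ q.2 < y} := by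
      ext q
      simp only [Tset, mem_setOf_eq]
      constructor
      · rintro ⟨h1, h2 | h2⟩
        · exact ⟨h2.1, h1, h2.2⟩
        · exfalso; linarith [h2.1, h2.2, h1]
      · rintro ⟨h1, h2, h3⟩; exact ⟨h2, Or.inl ⟨h1, h3⟩⟩
    rw [this, volume_tri h]
    rw [show ((2:ℝ≥0∞)) = ENNReal.ofReal 2 by norm_num, ← ENNReal.ofReal_mul (by norm_num)]
    congr 1
    rw [sq_abs]
    ring
  · have : Tset x y = ∅ := by
      subst h
      ext q
      constructor
      · rintro ⟨h1, h2 | h2⟩ <;> · exact absurd h1 (not_lt.mpr (le_trans h2.2.le h2.1))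
      · intro hq; exact absurd hq (notMem_empty q)
    rw [this, measure_empty, mul_zero]
    subst h
    simp
  · have : Tset x y = {q : ℝ × ℝ | y ≤ q.1 ∧ q.1 < q.2 ∧ q.2 < x} := by
      ext q
      simp only [Tset, mem_setOf_eq]
      constructor
      · rintro ⟨h1, h2 | h2⟩
        · exfalso; linarith [h2.1, h2.2, h1]
        · exact ⟨h2.1, h1, h2.2⟩
      · rintro ⟨h1, h2, h3⟩; exact ⟨h2, Or.inr ⟨h1, h3⟩⟩
    rw [this, volume_tri h]
    rw [show ((2:ℝ≥0∞)) = ENNReal.ofReal 2 by norm_num, ← ENNReal.ofReal_mul (by norm_num)]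
    congr 1
    rw [sq_abs]
    ring


/-! ### Couplings and the quantile coupling -/

def qpair (μ ν : Measure ℝ) : ℝ → ℝ × ℝ := fun a => (qm μ a, qm ν a)

lemma measurable_qpair (μ ν : Measure ℝ) [IsProbabilityMeasure μ] [IsProbabilityMeasure ν] :
    Measurable (qpair μ ν) :=
  (measurable_qm μ).prodMk (measurable_qm ν)

def gammaC (μ ν : Measure ℝ) : Measure (ℝ × ℝ) := Measure.map (qpair μ ν) leb01

variable (ν : Measure ℝ) [IsProbabilityMeasure ν]

instance : IsProbabilityMeasure (gammaC μ ν) :=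
  Measure.isProbabilityMeasure_map (measurable_qpair μ ν).aemeasurable

lemma gammaC_coupling : (gammaC μ ν).map Prod.fst = μ ∧ (gammaC μ ν).map Prod.snd = ν := by
  constructor
  · rw [gammaC, Measure.map_map measurable_fst (measurable_qpair μ ν)]
    exact map_qm μ
  · rw [gammaC, Measure.map_map measurable_snd (measurable_qpair μ ν)]
    exact map_qm ν

lemma gammaC_rect (a b : ℝ) :
    gammaC μ ν (Iic a ×ˢ Iic b) = min (μ (Iic a)) (ν (Iic b)) := by
  rw [gammaC, Measure.map_apply (measurable_qpair μ ν) (measurableSet_Iic.prod measurableSet_Iic)]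
  have : qpair μ ν ⁻¹' (Iic a ×ˢ Iic b) = {x : ℝ | qm μ x ≤ a ∧ qm ν x ≤ b} := by
    ext x; simp [qpair, Set.mem_prod]
  rw [this]
  exact leb01_qm_le_pair μ ν a b

section CouplingFacts

variable {γ : Measure (ℝ × ℝ)} [IsProbabilityMeasure γ]
variable (hγ : γ.map Prod.fst = μ ∧ γ.map Prod.snd = ν)
include hγ

lemma coupl_fst (s : ℝ) : γ (Iic s ×ˢ (univ : Set ℝ)) = μ (Iic s) := by
  have : Iic s ×ˢ (univ : Set ℝ) = Prod.fst ⁻¹' Iic s := by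
    ext p; simp [Set.mem_prod]
  rw [this, ← Measure.map_apply measurable_fst measurableSet_Iic, hγ.1]

lemma coupl_snd (s : ℝ) : γ ((univ : Set ℝ) ×ˢ Iic s) = ν (Iic s) := by
  have : (univ : Set ℝ) ×ˢ Iic s = Prod.snd ⁻¹' Iic s := by
    ext p; simp [Set.mem_prod]
  rw [this, ← Measure.map_apply measurable_snd measurableSet_Iic, hγ.2]

lemma rect_le_min (a b : ℝ) : γ (Iic a ×ˢ Iic b) ≤ min (μ (Iic a)) (ν (Iic b)) := by
  refine le_min ?_ ?_
  · rw [← coupl_fst μ ν hγ a]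
    exact measure_mono (Set.prod_mono_right (subset_univ _))
  · rw [← coupl_snd μ ν hγ b]
    exact measure_mono (Set.prod_mono_left (subset_univ _))

lemma slice_fst (s u : ℝ) :
    γ (Iic s ×ˢ Ioi u) = μ (Iic s) - γ (Iic s ×ˢ Iic u) := by
  have hadd : γ (Iic s ×ˢ Iic u) + γ (Iic s ×ˢ Ioi u) = μ (Iic s) := by
    rw [← measure_union ?_ (measurableSet_Iic.prod measurableSet_Ioi)]
    · rw [← Set.prod_union, Iic_union_Ioi]
      exact coupl_fst μ ν hγ s
    · exact Set.disjoint_left.mpr (fun p hp hp' => absurd (mem_Ioi.mp hp'.2) (not_lt.mpr hp.2))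
  exact ENNReal.eq_sub_of_add_eq (measure_ne_top γ _) (by rw [add_comm]; exact hadd)

lemma slice_snd (s u : ℝ) :
    γ (Ioi u ×ˢ Iic s) = ν (Iic s) - γ (Iic u ×ˢ Iic s) := by
  have hadd : γ (Iic u ×ˢ Iic s) + γ (Ioi u ×ˢ Iic s) = ν (Iic s) := by
    rw [← measure_union ?_ (measurableSet_Ioi.prod measurableSet_Iic)]
    · rw [← Set.union_prod, Iic_union_Ioi]
      exact coupl_snd μ ν hγ s
    · exact Set.disjoint_left.mpr (fun p hp hp' => absurd (mem_Ioi.mp hp'.1) (not_lt.mpr hp.1))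
  exact ENNReal.eq_sub_of_add_eq (measure_ne_top γ _) (by rw [add_comm]; exact hadd)

omit [IsProbabilityMeasure γ] hγ in
/-- The section of the `Tset` family, as subset of the coupling space. -/
lemma measurableSet_sect (q : ℝ × ℝ) : MeasurableSet {p : ℝ × ℝ | q ∈ Tset p.1 p.2} := by
  have : {p : ℝ × ℝ | q ∈ Tset p.1 p.2}
      = {p : ℝ × ℝ | q.1 < q.2 ∧ ((p.1 ≤ q.1 ∧ q.2 < p.2) ∨ (p.2 ≤ q.1 ∧ q.2 < p.1))} := rfl
  rw [this]
  by_cases h : q.1 < q.2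
  · have : {p : ℝ × ℝ | q.1 < q.2 ∧ ((p.1 ≤ q.1 ∧ q.2 < p.2) ∨ (p.2 ≤ q.1 ∧ q.2 < p.1))}
        = {p : ℝ × ℝ | (p.1 ≤ q.1 ∧ q.2 < p.2) ∨ (p.2 ≤ q.1 ∧ q.2 < p.1)} := by
      ext p; simp [h]
    rw [this]
    exact ((measurableSet_le measurable_fst measurable_const).inter
        (measurableSet_lt measurable_const measurable_snd)).union
      ((measurableSet_le measurable_snd measurable_const).inter
        (measurableSet_lt measurable_const measurable_fst))
  · have : {p : ℝ × ℝ | q.1 < q.2 ∧ ((p.1 ≤ q.1 ∧ q.2 < p.2) ∨ (p.2 ≤ q.1 ∧ q.2 < p.1))} = ∅ := by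
      ext p; simp [h]
    rw [this]; exact MeasurableSet.empty

omit [IsProbabilityMeasure γ] hγ in
lemma sect_eq (q : ℝ × ℝ) (h : q.1 < q.2) :
    {p : ℝ × ℝ | q ∈ Tset p.1 p.2} = (Iic q.1 ×ˢ Ioi q.2) ∪ (Ioi q.2 ×ˢ Iic q.1) := by
  ext p
  simp only [mem_setOf_eq, Tset, mem_union, Set.mem_prod, mem_Iic, mem_Ioi]
  constructor
  · rintro ⟨-, h2 | h2⟩
    · exact Or.inl h2
    · exact Or.inr ⟨h2.2, h2.1⟩
  · rintro (h2 | h2)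
    · exact ⟨h, Or.inl h2⟩
    · exact ⟨h, Or.inr ⟨h2.2, h2.1⟩⟩

lemma sect_measure (q : ℝ × ℝ) (h : q.1 < q.2) :
    γ {p : ℝ × ℝ | q ∈ Tset p.1 p.2}
      = (μ (Iic q.1) - γ (Iic q.1 ×ˢ Iic q.2)) + (ν (Iic q.1) - γ (Iic q.2 ×ˢ Iic q.1)) := by
  rw [sect_eq q h, measure_union ?_ (measurableSet_Ioi.prod measurableSet_Iic),
    slice_fst μ ν hγ, slice_snd μ ν hγ]
  refine Set.disjoint_left.mpr (fun p hp hp' => ?_)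
  have h1 : p.1 ≤ q.1 := hp.1
  have h2 : q.2 < p.1 := hp'.1
  linarith

omit [IsProbabilityMeasure γ] hγ in
lemma sect_empty (q : ℝ × ℝ) (h : ¬ q.1 < q.2) :
    {p : ℝ × ℝ | q ∈ Tset p.1 p.2} = ∅ := by
  ext p
  simp only [mem_setOf_eq, Tset, mem_empty_iff_false, iff_false]
  rintro ⟨h1, -⟩
  exact h h1

lemma sect_mono (q : ℝ × ℝ) :
    gammaC μ ν {p : ℝ × ℝ | q ∈ Tset p.1 p.2} ≤ γ {p : ℝ × ℝ | q ∈ Tset p.1 p.2} := by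
  by_cases h : q.1 < q.2
  · rw [sect_measure μ ν hγ q h, sect_measure μ ν (gammaC_coupling μ ν) q h]
    refine add_le_add (tsub_le_tsub_left ?_ _) (tsub_le_tsub_left ?_ _)
    · rw [gammaC_rect]
      exact rect_le_min μ ν hγ _ _
    · rw [gammaC_rect]
      exact rect_le_min μ ν hγ _ _
  · rw [sect_empty q h]
    simp

end CouplingFacts


/-! ### Cost representation and comparison -/

def costL (γ : Measure (ℝ × ℝ)) : ℝ≥0∞ :=
  ∫⁻ p, ENNReal.ofReal (|p.1 - p.2| ^ 2) ∂γ

def Uset : Set ((ℝ × ℝ) × (ℝ × ℝ)) := {v | v.2 ∈ Tset v.1.1 v.1.2}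

lemma measurableSet_Uset : MeasurableSet Uset := by
  have : Uset = {v : (ℝ × ℝ) × (ℝ × ℝ) | v.2.1 < v.2.2}
      ∩ (({v | v.1.1 ≤ v.2.1} ∩ {v | v.2.2 < v.1.2}) ∪ ({v | v.1.2 ≤ v.2.1} ∩ {v | v.2.2 < v.1.1})) := by
    ext v
    simp only [Uset, Tset, mem_setOf_eq, mem_inter_iff, mem_union]
  rw [this]
  exact (measurableSet_lt measurable_snd.fst measurable_snd.snd).inter
    (((measurableSet_le measurable_fst.fst measurable_snd.fst).inter
      (measurableSet_lt measurable_snd.snd measurable_fst.snd)).union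
     ((measurableSet_le measurable_fst.snd measurable_snd.fst).inter
      (measurableSet_lt measurable_snd.snd measurable_fst.fst)))

lemma costL_eq (γ : Measure (ℝ × ℝ)) [IsProbabilityMeasure γ] :
    costL γ = 2 * ∫⁻ q, γ {p : ℝ × ℝ | q ∈ Tset p.1 p.2} ∂(volume : Measure (ℝ × ℝ)) := by
  have step1 : costL γ = ∫⁻ p, 2 * (volume : Measure (ℝ × ℝ)) (Tset p.1 p.2) ∂γ := by
    refine lintegral_congr (fun p => ?_)
    rw [volume_Tset]
  rw [step1]
  have step2 : ∫⁻ p, 2 * (volume : Measure (ℝ × ℝ)) (Tset p.1 p.2) ∂γ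
      = 2 * ∫⁻ p, (volume : Measure (ℝ × ℝ)) (Tset p.1 p.2) ∂γ :=
    lintegral_const_mul' 2 _ (by norm_num)
  rw [step2]
  congr 1
  have step3 : ∀ p : ℝ × ℝ, (volume : Measure (ℝ × ℝ)) (Tset p.1 p.2)
      = ∫⁻ q, Uset.indicator 1 (p, q) ∂(volume : Measure (ℝ × ℝ)) := by
    intro p
    rw [← lintegral_indicator_one (measurableSet_Tset p.1 p.2)]
    exact lintegral_congr (fun q => rfl)
  calc ∫⁻ p, (volume : Measure (ℝ × ℝ)) (Tset p.1 p.2) ∂γ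
      = ∫⁻ p, ∫⁻ q, Uset.indicator 1 (p, q) ∂(volume : Measure (ℝ × ℝ)) ∂γ :=
        lintegral_congr step3
    _ = ∫⁻ q, ∫⁻ p, Uset.indicator 1 (p, q) ∂γ ∂(volume : Measure (ℝ × ℝ)) := by
        apply lintegral_lintegral_swap
        exact (measurable_one.indicator measurableSet_Uset).aemeasurable
    _ = ∫⁻ q, γ {p : ℝ × ℝ | q ∈ Tset p.1 p.2} ∂(volume : Measure (ℝ × ℝ)) := by
        refine lintegral_congr (fun q => ?_)
        rw [← lintegral_indicator_one (measurableSet_sect q)]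
        exact lintegral_congr (fun p => rfl)

lemma costL_mono {γ : Measure (ℝ × ℝ)} [IsProbabilityMeasure γ]
    (hγ : γ.map Prod.fst = μ ∧ γ.map Prod.snd = ν) :
    costL (gammaC μ ν) ≤ costL γ := by
  rw [costL_eq, costL_eq]
  refine mul_le_mul_right (lintegral_mono (fun q => ?_)) 2
  exact sect_mono μ ν hγ q

/-! ### Integrability of the cost -/

lemma cost_integrable {γ : Measure (ℝ × ℝ)} [IsProbabilityMeasure γ]
    (hγ : γ.map Prod.fst = μ ∧ γ.map Prod.snd = ν)
    (hμ2 : Integrable (fun x : ℝ => |x| ^ 2) μ) (hν2 : Integrable (fun x : ℝ => |x| ^ 2) ν) :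
    Integrable (fun p : ℝ × ℝ => |p.1 - p.2| ^ 2) γ := by
  have h1 : Integrable (fun p : ℝ × ℝ => |p.1| ^ 2) γ := by
    rw [← hγ.1] at hμ2
    exact (integrable_map_measure
      (continuous_abs.pow 2).measurable.aestronglyMeasurable
      measurable_fst.aemeasurable).mp hμ2
  have h2 : Integrable (fun p : ℝ × ℝ => |p.2| ^ 2) γ := by
    rw [← hγ.2] at hν2
    exact (integrable_map_measure
      (continuous_abs.pow 2).measurable.aestronglyMeasurable
      measurable_snd.aemeasurable).mp hν2
  refine Integrable.mono' ((h1.add h2).const_mul 2)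
    (((continuous_fst.sub continuous_snd).abs.pow 2).measurable.aestronglyMeasurable)
    (ae_of_all _ (fun p => ?_))
  have : |p.1 - p.2| ^ 2 ≤ 2 * (|p.1| ^ 2 + |p.2| ^ 2) := by
    rw [sq_abs, sq_abs, sq_abs]
    nlinarith [sq_nonneg (p.1 + p.2)]
  calc ‖|p.1 - p.2| ^ 2‖ = |p.1 - p.2| ^ 2 := by
        rw [Real.norm_eq_abs, abs_of_nonneg (by positivity)]
    _ ≤ 2 * (|p.1| ^ 2 + |p.2| ^ 2) := this


/-! ### The 1D Wasserstein formula -/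

lemma cost_measurable : Measurable (fun p : ℝ × ℝ => |p.1 - p.2| ^ 2) :=
  (((continuous_fst.sub continuous_snd).abs).pow 2).measurable

lemma cost_gammaC :
    ∫ p, |p.1 - p.2| ^ 2 ∂(gammaC μ ν) = ∫ a, |qm μ a - qm ν a| ^ 2 ∂leb01 := by
  rw [gammaC, integral_map (measurable_qpair μ ν).aemeasurable
    cost_measurable.aestronglyMeasurable]
  rfl

lemma W2sqR_eq (hμ2 : Integrable (fun x : ℝ => |x| ^ 2) μ)
    (hν2 : Integrable (fun x : ℝ => |x| ^ 2) ν) :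
    W2sqR μ ν = ∫ a, |qm μ a - qm ν a| ^ 2 ∂leb01 := by
  set r₀ := ∫ a, |qm μ a - qm ν a| ^ 2 ∂leb01 with hr₀
  have hmem : r₀ ∈ {r | ∃ γ : Measure (ℝ × ℝ), IsProbabilityMeasure γ ∧ IsCouplingR γ μ ν ∧
      r = ∫ p, |p.1 - p.2| ^ 2 ∂γ} :=
    ⟨gammaC μ ν, inferInstance, gammaC_coupling μ ν, (cost_gammaC μ ν).symm⟩
  have hlb : ∀ r ∈ {r | ∃ γ : Measure (ℝ × ℝ), IsProbabilityMeasure γ ∧ IsCouplingR γ μ ν ∧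
      r = ∫ p, |p.1 - p.2| ^ 2 ∂γ}, r₀ ≤ r := by
    rintro r ⟨γ, hpγ, hcoup, rfl⟩
    haveI := hpγ
    have hIγ : Integrable (fun p : ℝ × ℝ => |p.1 - p.2| ^ 2) γ :=
      cost_integrable μ ν hcoup hμ2 hν2
    have hIc : Integrable (fun p : ℝ × ℝ => |p.1 - p.2| ^ 2) (gammaC μ ν) :=
      cost_integrable μ ν (gammaC_coupling μ ν) hμ2 hν2
    have e1 : ∫ p, |p.1 - p.2| ^ 2 ∂γ = (costL γ).toReal := by
      rw [integral_eq_lintegral_of_nonneg_ae (ae_of_all _ fun p => by positivity)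
        cost_measurable.aestronglyMeasurable]
      rfl
    have e0 : r₀ = (costL (gammaC μ ν)).toReal := by
      rw [hr₀, ← cost_gammaC μ ν,
        integral_eq_lintegral_of_nonneg_ae (ae_of_all _ fun p => by positivity)
        cost_measurable.aestronglyMeasurable]
      rfl
    rw [e0, e1]
    exact ENNReal.toReal_mono hIγ.lintegral_lt_top.ne (costL_mono μ ν hcoup)
  exact le_antisymm (csInf_le ⟨r₀, hlb⟩ hmem) (le_csInf ⟨r₀, hmem⟩ hlb)

/-! ### L² facts for quantile functions -/

lemma memL2_qm (hμ2 : Integrable (fun x : ℝ => |x| ^ 2) μ) : MemLp (qm μ) 2 leb01 := by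
  have h : MemLp (id : ℝ → ℝ) 2 (Measure.map (qm μ) leb01) := by
    rw [map_qm μ]
    refine (memLp_two_iff_integrable_sq aestronglyMeasurable_id).mpr ?_
    simpa [sq_abs] using hμ2
  have := (memLp_map_measure_iff aestronglyMeasurable_id
    (measurable_qm μ).aemeasurable).mp h
  simpa using this

/-! ### The extrapolation functional in quantile coordinates -/

lemma FtR_formula {t : ℝ} (ht : 1 < t) (ν₀ ν₁ ρ : Measure ℝ)
    [IsProbabilityMeasure ν₀] [IsProbabilityMeasure ν₁] [IsProbabilityMeasure ρ]
    (h₀2 : Integrable (fun x : ℝ => |x| ^ 2) ν₀) (h₁2 : Integrable (fun x : ℝ => |x| ^ 2) ν₁)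
    (hρ2 : Integrable (fun x : ℝ => |x| ^ 2) ρ) :
    FtR t ν₀ ν₁ ρ =
      ((∫ a, (qm ρ a - (t * qm ν₁ a - (t - 1) * qm ν₀ a)) ^ 2 ∂leb01)
        + ∫ a, (t * (qm ν₁ a) ^ 2 - (t - 1) * (qm ν₀ a) ^ 2
            - (t * qm ν₁ a - (t - 1) * qm ν₀ a) ^ 2) ∂leb01) / (2 * t * (t - 1)) := by
  have hf := memL2_qm ρ hρ2
  have hg0 := memL2_qm ν₀ h₀2
  have hg1 := memL2_qm ν₁ h₁2
  have hη : MemLp (fun a => t * qm ν₁ a - (t - 1) * qm ν₀ a) 2 leb01 :=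
    (hg1.const_mul t).sub (hg0.const_mul (t - 1))
  have I1 : Integrable (fun a => (qm ρ a - qm ν₁ a) ^ 2) leb01 := (hf.sub hg1).integrable_sq
  have I0 : Integrable (fun a => (qm ρ a - qm ν₀ a) ^ 2) leb01 := (hf.sub hg0).integrable_sq
  have Iη : Integrable (fun a => (qm ρ a - (t * qm ν₁ a - (t - 1) * qm ν₀ a)) ^ 2) leb01 :=
    (hf.sub hη).integrable_sq
  have Ic : Integrable (fun a => t * (qm ν₁ a) ^ 2 - (t - 1) * (qm ν₀ a) ^ 2
      - (t * qm ν₁ a - (t - 1) * qm ν₀ a) ^ 2) leb01 :=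
    ((hg1.integrable_sq.const_mul t).sub (hg0.integrable_sq.const_mul (t - 1))).sub
      hη.integrable_sq
  have key : (∫ a, (qm ρ a - (t * qm ν₁ a - (t - 1) * qm ν₀ a)) ^ 2 ∂leb01)
      + (∫ a, (t * (qm ν₁ a) ^ 2 - (t - 1) * (qm ν₀ a) ^ 2
          - (t * qm ν₁ a - (t - 1) * qm ν₀ a) ^ 2) ∂leb01)
      = t * (∫ a, (qm ρ a - qm ν₁ a) ^ 2 ∂leb01)
        - (t - 1) * (∫ a, (qm ρ a - qm ν₀ a) ^ 2 ∂leb01) := by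
    rw [← integral_add Iη Ic, ← integral_const_mul, ← integral_const_mul,
      ← integral_sub (I1.const_mul t) (I0.const_mul (t - 1))]
    exact integral_congr_ae (ae_of_all _ fun a => by ring)
  unfold FtR
  rw [W2sqR_eq ρ ν₁ hρ2 h₁2, W2sqR_eq ρ ν₀ hρ2 h₀2]
  simp only [sq_abs]
  rw [key]
  have ht0 : t ≠ 0 := by linarith
  have ht1 : t - 1 ≠ 0 := by linarith
  field_simp

lemma J_eq {t : ℝ} (ν₀ ν₁ ρ : Measure ℝ)
    [IsProbabilityMeasure ν₀] [IsProbabilityMeasure ν₁] [IsProbabilityMeasure ρ] :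
    (∫ a in Set.Ioo (0 : ℝ) 1,
        |quantile ρ a - (t * quantile ν₁ a - (t - 1) * quantile ν₀ a)| ^ 2)
      = ∫ a, (qm ρ a - (t * qm ν₁ a - (t - 1) * qm ν₀ a)) ^ 2 ∂leb01 := by
  refine setIntegral_congr_fun measurableSet_Ioo (fun a ha => ?_)
  rw [qm_eq_on ρ ha, qm_eq_on ν₁ ha, qm_eq_on ν₀ ha, sq_abs]

end Stmt17


/-- in one dimension, `μ` minimizes the metric extrapolation functional
iff its quantile function is an `L²((0,1))`-projection of
`t·F_{ν₁}^{[-1]} - (t-1)·F_{ν₀}^{[-1]}` onto the set of quantile functions of measures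
in `P₂(ℝ)`. -/
theorem stmt_17 {t : ℝ} (ht : 1 < t)
    (ν₀ ν₁ : Measure ℝ) (h₀ : ν₀ ∈ P2R) (h₁ : ν₁ ∈ P2R)
    (μ : Measure ℝ) (hμ : μ ∈ P2R) :
    (∀ ρ ∈ P2R, FtR t ν₀ ν₁ μ ≤ FtR t ν₀ ν₁ ρ) ↔
      (∀ ρ ∈ P2R,
        (∫ a in Set.Ioo (0 : ℝ) 1,
            |quantile μ a - (t * quantile ν₁ a - (t - 1) * quantile ν₀ a)| ^ 2) ≤
          ∫ a in Set.Ioo (0 : ℝ) 1,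
            |quantile ρ a - (t * quantile ν₁ a - (t - 1) * quantile ν₀ a)| ^ 2) := by
  obtain ⟨hμp, hμ2⟩ := hμ
  obtain ⟨h₀p, h₀2⟩ := h₀
  obtain ⟨h₁p, h₁2⟩ := h₁
  have hk : (0:ℝ) < 2 * t * (t - 1) := by nlinarith
  have main : ∀ ρ : Measure ℝ, ρ ∈ P2R →
      (FtR t ν₀ ν₁ μ ≤ FtR t ν₀ ν₁ ρ ↔
        (∫ a in Set.Ioo (0 : ℝ) 1,
            |quantile μ a - (t * quantile ν₁ a - (t - 1) * quantile ν₀ a)| ^ 2) ≤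
          ∫ a in Set.Ioo (0 : ℝ) 1,
            |quantile ρ a - (t * quantile ν₁ a - (t - 1) * quantile ν₀ a)| ^ 2) := by
    intro ρ hρ
    obtain ⟨hρp, hρ2⟩ := hρ
    rw [Stmt17.FtR_formula ht ν₀ ν₁ μ h₀2 h₁2 hμ2, Stmt17.FtR_formula ht ν₀ ν₁ ρ h₀2 h₁2 hρ2,
      Stmt17.J_eq ν₀ ν₁ μ, Stmt17.J_eq ν₀ ν₁ ρ, div_le_div_iff_of_pos_right hk,
      add_le_add_iff_right]
  constructor
  · intro h ρ hρ
    exact (main ρ hρ).mp (h ρ hρ)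
  · intro h ρ hρ
    exact (main ρ hρ).mpr (h ρ hρ)
end
end

section
/- Let d ≥ 1, t > 1, M, N ≥ 1, points x₁,…,x_M, y₁,…,y_N ∈ ℝ^d, and positive weights a ∈ ℝ^M, b ∈ ℝ^N with Σᵢaᵢ = Σⱼbⱼ = 1. Fix ε > 0 and a step size τ > 0 with τ ≤ t(t−1)/|b|_∞. Consider the iterations: given (ψ^n, Z^n), set φ^{n+1}_i = −ε log Σⱼ bⱼ exp( (−C^t_{ij}(Z^n) + ψ^n_j)/ε ) for 1 ≤ i ≤ M−1 and φ^{n+1}_M = 0; then ψ^{n+1}_j = −ε log Σᵢ aᵢ exp( (−C^t_{ij}(Z^n) + φ^{n+1}_i)/ε ) for 1 ≤ j ≤ N; then z^{n+1}_j = z^n_j − τ[ (z^n_j − y_j)bⱼ/(t−1) − Σᵢ ((z^n_j − xᵢ)/t) aᵢbⱼ exp( (−C^t_{ij}(Z^n) + φ^{n+1}_i + ψ^{n+1}_j)/ε ) ], where C^t_{ij}(Z) = |z_j − x_i|²/(2t). If z^0_j ∈ t·y_j − (t−1)·conv{x₁,…,x_M} for all j, then for every n ≥ 0 and every j, z^n_j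 ∈ t·y_j − (t−1)·conv{x₁,…,x_M}; in particular |z^n_j − y_j| ≤ (t−1)·D and |z^n_j − x_i| ≤ t·D for all i, j, where D = max_{i,j} |x_i − y_j|. -/
noncomputable section

abbrev EucSp (d : ℕ) := EuclideanSpace ℝ (Fin d)

/-- the iterates of the Sinkhorn algorithm with gradient step for the
entropic barycentric problem stay in `t·y_j - (t-1)·conv{x₁,…,x_M}`, provided the
initialization does and `τ ≤ t(t-1)/|b|_∞`. -/
theorem stmt_19 {d M N : ℕ} (hd : 1 ≤ d) (hM : 1 ≤ M) (hN : 1 ≤ N)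
    {t : ℝ} (ht : 1 < t)
    (x : Fin M → EucSp d) (y : Fin N → EucSp d)
    (a : Fin M → ℝ) (b : Fin N → ℝ)
    (ha : ∀ i, 0 < a i) (hb : ∀ j, 0 < b j)
    (hsa : ∑ i, a i = 1) (hsb : ∑ j, b j = 1)
    {ε τ : ℝ} (hε : 0 < ε) (hτ : 0 < τ)
    (hstep : τ * sSup (Set.range b) ≤ t * (t - 1))
    (φ : ℕ → Fin M → ℝ) (ψ : ℕ → Fin N → ℝ) (Z : ℕ → Fin N → EucSp d)
    (hφ : ∀ n, ∀ i : Fin M,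
      ((i : ℕ) + 1 < M →
        φ (n + 1) i = -ε * Real.log (∑ j, b j *
          Real.exp ((-(‖Z n j - x i‖ ^ 2 / (2 * t)) + ψ n j) / ε))) ∧
      ((i : ℕ) + 1 = M → φ (n + 1) i = 0))
    (hψ : ∀ n, ∀ j : Fin N,
      ψ (n + 1) j = -ε * Real.log (∑ i, a i *
        Real.exp ((-(‖Z n j - x i‖ ^ 2 / (2 * t)) + φ (n + 1) i) / ε)))
    (hZ : ∀ n, ∀ j : Fin N,
      Z (n + 1) j = Z n j - τ •
        ((b j / (t - 1)) • (Z n j - y j) -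
          ∑ i, ((a i * b j / t) *
            Real.exp ((-(‖Z n j - x i‖ ^ 2 / (2 * t)) + φ (n + 1) i + ψ (n + 1) j) / ε)) •
              (Z n j - x i)))
    (hZ0 : ∀ j, Z 0 j ∈ (fun w => t • y j - (t - 1) • w) '' convexHull ℝ (Set.range x)) :
    ∀ n, ∀ j, Z n j ∈ (fun w => t • y j - (t - 1) • w) '' convexHull ℝ (Set.range x) ∧
      ‖Z n j - y j‖ ≤ (t - 1) * sSup (Set.range fun p : Fin M × Fin N => ‖x p.1 - y p.2‖) ∧
      ∀ i, ‖Z n j - x i‖ ≤ t * sSup (Set.range fun p : Fin M × Fin N => ‖x p.1 - y p.2‖) := by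
  haveI : Nonempty (Fin M) := Fin.pos_iff_nonempty.mp hM
  have ht0 : (0:ℝ) < t := lt_trans one_pos ht
  have ht1 : (0:ℝ) < t - 1 := by linarith
  have ht0' : t ≠ 0 := ne_of_gt ht0
  have ht1' : t - 1 ≠ 0 := ne_of_gt ht1
  set D := sSup (Set.range fun p : Fin M × Fin N => ‖x p.1 - y p.2‖) with hDdef
  have hD : ∀ i j, ‖x i - y j‖ ≤ D := fun i j =>
    le_csSup ((Set.finite_range _).bddAbove) ⟨(i, j), rfl⟩
  -- membership implies the norm bounds
  have key : ∀ (j : Fin N) (z : EucSp d),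
      z ∈ (fun w => t • y j - (t - 1) • w) '' convexHull ℝ (Set.range x) →
      ‖z - y j‖ ≤ (t - 1) * D ∧ ∀ i, ‖z - x i‖ ≤ t * D := by
    rintro j z ⟨w, hw, rfl⟩
    simp only []
    have hwy : ‖w - y j‖ ≤ D := by
      have hsub : Set.range x ⊆ Metric.closedBall (y j) D := by
        rintro v ⟨i, rfl⟩
        simpa [Metric.mem_closedBall, dist_eq_norm] using hD i j
      have := convexHull_min hsub (convex_closedBall (y j) D) hw
      simpa [Metric.mem_closedBall, dist_eq_norm] using this
    have h1 : (t • y j - (t - 1) • w) - y j = (t - 1) • (y j - w) := by module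
    have hn1 : ‖(t • y j - (t - 1) • w) - y j‖ ≤ (t - 1) * D := by
      rw [h1, norm_smul, Real.norm_eq_abs, abs_of_pos ht1, norm_sub_rev]
      exact mul_le_mul_of_nonneg_left hwy ht1.le
    refine ⟨hn1, fun i => ?_⟩
    have h2 : (t • y j - (t - 1) • w) - x i
        = ((t • y j - (t - 1) • w) - y j) + (y j - x i) := by module
    calc ‖(t • y j - (t - 1) • w) - x i‖
        ≤ ‖(t • y j - (t - 1) • w) - y j‖ + ‖y j - x i‖ := by
          rw [h2]; exact norm_add_le _ _
      _ ≤ (t - 1) * D + D := add_le_add hn1 (by rw [norm_sub_rev]; exact hD i j)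
      _ = t * D := by ring
  -- the invariant, by induction on n
  have inv : ∀ n, ∀ j, Z n j ∈ (fun w => t • y j - (t - 1) • w) '' convexHull ℝ (Set.range x) := by
    intro n
    induction n with
    | zero => exact hZ0
    | succ n ih =>
      intro j
      obtain ⟨w, hw, hwz⟩ := ih j
      have hz' : Z n j = t • y j - (t - 1) • w := hwz.symm
      have hβ : (0:ℝ) < b j := hb j
      have hβ' : b j ≠ 0 := ne_of_gt hβ
      -- the entropic weights sum to one after the ψ update
      have hsum1 : ∑ i, a i *
          Real.exp ((-(‖Z n j - x i‖ ^ 2 / (2 * t)) + φ (n + 1) i + ψ (n + 1) j) / ε) = 1 := by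
        have he : ∀ i : Fin M,
            Real.exp ((-(‖Z n j - x i‖ ^ 2 / (2 * t)) + φ (n + 1) i + ψ (n + 1) j) / ε)
            = Real.exp ((-(‖Z n j - x i‖ ^ 2 / (2 * t)) + φ (n + 1) i) / ε)
              * Real.exp (ψ (n + 1) j / ε) := fun i => by
          rw [← Real.exp_add, ← add_div]
        have hS0 : (0:ℝ) < ∑ i, a i *
            Real.exp ((-(‖Z n j - x i‖ ^ 2 / (2 * t)) + φ (n + 1) i) / ε) :=
          Finset.sum_pos (fun i _ => mul_pos (ha i) (Real.exp_pos _)) Finset.univ_nonempty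
        simp_rw [he, ← mul_assoc, ← Finset.sum_mul]
        rw [hψ n j]
        have hdiv : -ε * Real.log (∑ i, a i *
            Real.exp ((-(‖Z n j - x i‖ ^ 2 / (2 * t)) + φ (n + 1) i) / ε)) / ε
            = -Real.log (∑ i, a i *
            Real.exp ((-(‖Z n j - x i‖ ^ 2 / (2 * t)) + φ (n + 1) i) / ε)) := by
          field_simp
        rw [hdiv, Real.exp_neg, Real.exp_log hS0]
        exact mul_inv_cancel₀ (ne_of_gt hS0)
      -- hence the c-coefficients sum to b j / t
      have hsumc : ∑ i, (a i * b j / t) *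
          Real.exp ((-(‖Z n j - x i‖ ^ 2 / (2 * t)) + φ (n + 1) i + ψ (n + 1) j) / ε)
          = b j / t := by
        calc ∑ i, (a i * b j / t) *
              Real.exp ((-(‖Z n j - x i‖ ^ 2 / (2 * t)) + φ (n + 1) i + ψ (n + 1) j) / ε)
            = (b j / t) * ∑ i, a i *
              Real.exp ((-(‖Z n j - x i‖ ^ 2 / (2 * t)) + φ (n + 1) i + ψ (n + 1) j) / ε) := by
              rw [Finset.mul_sum]; exact Finset.sum_congr rfl fun i _ => by ring
          _ = b j / t := by rw [hsum1, mul_one]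
      -- split the gradient sum
      have hsplit : ∑ i, ((a i * b j / t) *
            Real.exp ((-(‖Z n j - x i‖ ^ 2 / (2 * t)) + φ (n + 1) i + ψ (n + 1) j) / ε))
              • (Z n j - x i)
          = (b j / t) • Z n j - ∑ i, ((a i * b j / t) *
            Real.exp ((-(‖Z n j - x i‖ ^ 2 / (2 * t)) + φ (n + 1) i + ψ (n + 1) j) / ε))
              • x i := by
        simp_rw [smul_sub]
        rw [Finset.sum_sub_distrib, ← Finset.sum_smul, hsumc]
      -- the rescaled barycenter lies in the convex hull
      have hwsum : ∑ i, (t / b j) * ((a i * b j / t) *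
          Real.exp ((-(‖Z n j - x i‖ ^ 2 / (2 * t)) + φ (n + 1) i + ψ (n + 1) j) / ε)) = 1 := by
        rw [← Finset.mul_sum, hsumc]
        field_simp
      have hmem0 : ∑ i, ((t / b j) * ((a i * b j / t) *
          Real.exp ((-(‖Z n j - x i‖ ^ 2 / (2 * t)) + φ (n + 1) i + ψ (n + 1) j) / ε))) • x i
          ∈ convexHull ℝ (Set.range x) := by
        exact (convex_convexHull ℝ (Set.range x)).sum_mem
          (fun i _ => mul_nonneg (div_nonneg ht0.le hβ.le)
            (mul_nonneg (div_nonneg (mul_nonneg (ha i).le hβ.le) ht0.le) (Real.exp_pos _).le))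
          hwsum (fun i _ => subset_convexHull ℝ _ (Set.mem_range_self i))
      have hmem : (t / b j) • ∑ i, ((a i * b j / t) *
          Real.exp ((-(‖Z n j - x i‖ ^ 2 / (2 * t)) + φ (n + 1) i + ψ (n + 1) j) / ε)) • x i
          ∈ convexHull ℝ (Set.range x) := by
        rw [Finset.smul_sum]
        simp_rw [← mul_smul]
        exact hmem0
      -- step size bound
      have hl0 : 0 ≤ τ * b j / (t * (t - 1)) := by positivity
      have hl1 : τ * b j / (t * (t - 1)) ≤ 1 := by
        rw [div_le_one (by positivity)]
        have hβsup : b j ≤ sSup (Set.range b) := le_csSup ((Set.finite_range b).bddAbove) ⟨j, rfl⟩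
        nlinarith
      refine ⟨(1 - τ * b j / (t * (t - 1))) • w + (τ * b j / (t * (t - 1))) •
          ((t / b j) • ∑ i, ((a i * b j / t) *
          Real.exp ((-(‖Z n j - x i‖ ^ 2 / (2 * t)) + φ (n + 1) i + ψ (n + 1) j) / ε)) • x i),
        ?_, ?_⟩
      · exact (convex_convexHull ℝ (Set.range x)) hw hmem (by linarith) hl0 (by ring)
      · show t • y j - (t - 1) • _ = Z (n + 1) j
        rw [hZ n j, hsplit, hz']
        match_scalars <;> field_simp <;> ring
  intro n j
  exact ⟨inv n j, (key j _ (inv n j)).1, (key j _ (inv n j)).2⟩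
end
end
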